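/- Let A be an associative unital Rota–Baxter algebra of weight λ with RB-operator R over a field of characteristic zero. Then for all n ≥ 1: (R(1))ⁿ = Σ_{k=1}^{n} k! λ^{n-k} S(n,k) R^k(1), where S(n,k) are Stirling numbers of the second kind. -/

import Mathlib

/-- A Rota–Baxter operator of weight `lam` on an algebra over a field `F`. -/
def IsRotaBaxter (F : Type*) {A : Type*} [Field F] [NonUnitalNonAssocRing A]
    [Module F A] (lam : F) (R : A →ₗ[F] A) : Prop :=
  ∀ x y : A, R x * R y = R (R x * y + x * R y + lam • (x * y))

/-- Stirling numbers of the second kind: `stirlingSecond n k` is the number of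
partitions of an `n`-element set into `k` nonempty blocks. -/
def stirlingSecond : ℕ → ℕ → ℕ
  | 0, 0 => 1
  | 0, _ + 1 => 0
  | _ + 1, 0 => 0
  | n + 1, k + 1 => stirlingSecond n k + (k + 1) * stirlingSecond n (k + 1)

/-!
The Rota–Baxter identity with `y = 1` reads `R(x) R(1) = R(R(x) + x R(1) + λ x)`; applied to
`x = R^k(1)` it gives, by induction on `k`,
`R^k(1) R(1) = (k + 1) R^{k+1}(1) + k λ R^k(1)`.
Hence `(R 1)^n` is a combination of the `R^k(1)` whose coefficients `c(n, k)` satisfy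
`c(n+1, k+1) = (k+1) c(n, k) + (k+1) λ c(n, k+1)`, and this is exactly the Stirling recurrence
`S(n+1, k+1) = S(n, k) + (k+1) S(n, k+1)` rescaled by `k! λ^(n-k)`.
-/

theorem stirlingSecond_eq_zero_of_lt : ∀ {n k : ℕ}, n < k → stirlingSecond n k = 0
  | 0, _ + 1, _ => rfl
  | n + 1, k + 1, h => by
    rw [stirlingSecond, stirlingSecond_eq_zero_of_lt (by omega),
      stirlingSecond_eq_zero_of_lt (by omega), mul_zero, add_zero]

def stirlingRBCoeff {F : Type*} [CommSemiring F] (lam : F) (n k : ℕ) : F :=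
  (k.factorial : F) * lam ^ (n - k) * (stirlingSecond n k : F)

section stirlingRBCoeff

variable {F : Type*} [CommSemiring F] (lam : F)

theorem stirlingRBCoeff_of_lt {n k : ℕ} (h : n < k) : stirlingRBCoeff lam n k = 0 := by
  simp [stirlingRBCoeff, stirlingSecond_eq_zero_of_lt h]

theorem stirlingRBCoeff_succ_zero (n : ℕ) : stirlingRBCoeff lam (n + 1) 0 = 0 := by
  simp [stirlingRBCoeff, stirlingSecond]

theorem stirlingRBCoeff_succ_succ (n k : ℕ) :
    stirlingRBCoeff lam (n + 1) (k + 1)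
      = ((k : F) + 1) * stirlingRBCoeff lam n k
        + ((k : F) + 1) * lam * stirlingRBCoeff lam n (k + 1) := by
  obtain hlt | rfl | hgt := lt_trichotomy k n
  · obtain ⟨m, rfl⟩ := Nat.exists_eq_add_of_lt hlt
    simp only [stirlingRBCoeff, stirlingSecond, Nat.factorial_succ,
      show k + m + 1 + 1 - (k + 1) = m + 1 by omega, show k + m + 1 - k = m + 1 by omega,
      show k + m + 1 - (k + 1) = m by omega]
    push_cast
    ring
  · simp only [stirlingRBCoeff, stirlingSecond, stirlingSecond_eq_zero_of_lt (Nat.lt_succ_self k),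
      Nat.factorial_succ, Nat.sub_self]
    push_cast
    ring
  · rw [stirlingRBCoeff_of_lt lam (by omega : n + 1 < k + 1), stirlingRBCoeff_of_lt lam hgt,
      stirlingRBCoeff_of_lt lam (by omega : n < k + 1)]
    ring

end stirlingRBCoeff

namespace IsRotaBaxter

variable {F A : Type*} [Field F] [Ring A] [Algebra F A] {lam : F} {R : A →ₗ[F] A}

theorem pow_apply_one_mul_apply_one (hR : IsRotaBaxter F lam R) (k : ℕ) :
    (R ^ k) 1 * R 1 = ((k : F) + 1) • (R ^ (k + 1)) 1 + ((k : F) * lam) • (R ^ k) 1 := by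
  induction k with
  | zero => simp
  | succ k ih =>
    have hRk : (R ^ (k + 1)) 1 * R 1
        = R ((R ^ (k + 1)) 1 + (R ^ k) 1 * R 1 + lam • (R ^ k) 1) := by
      rw [pow_succ', Module.End.mul_apply, hR, mul_one, mul_one]
    rw [hRk, ih, pow_succ' R (k + 1), pow_succ' R k]
    simp only [map_add, map_smul, Module.End.mul_apply]
    push_cast
    module

theorem apply_one_pow_eq_sum_range (hR : IsRotaBaxter F lam R) (n : ℕ) :
    R 1 ^ n = ∑ k ∈ Finset.range (n + 1), stirlingRBCoeff lam n k • (R ^ k) 1 := by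
  induction n with
  | zero => simp [stirlingRBCoeff, stirlingSecond]
  | succ n ih =>
    -- reindex `k ↦ k + 1`: the term `k = 0` vanishes and the new term `k = n` has `c(n, n+1) = 0`
    have hshift : ∑ k ∈ Finset.range (n + 1), (stirlingRBCoeff lam n k * (k * lam)) • (R ^ k) 1
        = ∑ k ∈ Finset.range (n + 1),
            (stirlingRBCoeff lam n (k + 1) * ((k + 1) * lam)) • (R ^ (k + 1)) 1 := by
      rw [Finset.sum_range_succ', Finset.sum_range_succ, stirlingRBCoeff_of_lt lam n.lt_succ_self]
      simp
    rw [pow_succ, ih, Finset.sum_mul, Finset.sum_range_succ' _ (n + 1), stirlingRBCoeff_succ_zero,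
      zero_smul, add_zero]
    simp only [smul_mul_assoc, hR.pow_apply_one_mul_apply_one, smul_add, smul_smul]
    rw [Finset.sum_add_distrib, hshift, ← Finset.sum_add_distrib]
    refine Finset.sum_congr rfl fun k _ => ?_
    rw [← add_smul, stirlingRBCoeff_succ_succ]
    ring_nf

end IsRotaBaxter

theorem rb_stirling_second_general {F A : Type*} [Field F] [Ring A] [Algebra F A]
    (lam : F) (R : A →ₗ[F] A) (hR : IsRotaBaxter F lam R) (n : ℕ) (hn : 1 ≤ n) :
    (R 1) ^ n
      = ∑ k ∈ Finset.Icc 1 n,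
          (((Nat.factorial k : ℕ) : F) * lam ^ (n - k) * (stirlingSecond n k : F))
            • ((R ^ k) (1 : A)) := by
  obtain ⟨m, rfl⟩ := Nat.exists_eq_add_of_le' hn
  rw [hR.apply_one_pow_eq_sum_range, Finset.range_eq_Ico, Finset.sum_eq_sum_Ico_succ_bot
    (Nat.succ_pos _), stirlingRBCoeff_succ_zero, zero_smul, zero_add, Nat.succ_eq_add_one,
    Finset.Ico_add_one_right_eq_Icc]
  rfl

/-- `(R 1)ⁿ = Σ_{k=1}^n k! λ^(n-k) S(n,k) R^k(1)`. -/
theorem rb_stirling_second {F A : Type*} [Field F] [CharZero F] [Ring A] [Algebra F A]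
    (lam : F) (R : A →ₗ[F] A) (hR : IsRotaBaxter F lam R) (n : ℕ) (hn : 1 ≤ n) :
    (R 1) ^ n
      = ∑ k ∈ Finset.Icc 1 n,
          (((Nat.factorial k : ℕ) : F) * lam ^ (n - k) * (stirlingSecond n k : F))
            • ((R ^ k) (1 : A)) :=
  rb_stirling_second_general lam R hR n hn
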